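/- Let S₁ and S₂ be two consistent queryless schedules. The concatenation S₁.S₂ is consistent if and only if N^min_I(S₂) ⊆ N^max_O(S₁), E^min_I(S₂) ⊆ E^max_O(S₁), N^min_O(S₁) ⊆ N^max_I(S₂), and E^min_O(S₁) ⊆ E^max_I(S₂). -/

import Mathlib

attribute [local instance] Classical.propDecidable

/-! ## Data model: nodes, labels, edges, document trees -/

abbrev Node := ℕ
abbrev Label := ℕ
abbrev Edge := Node × Label × Node

/-- A candidate document tree: a finite node set, a finite edge set, a root. -/
structure Tree3 where
  N : Finset Node
  E : Finset Edge
  root : Node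

/-- The edge-step relation of a set of labelled edges. -/
def estep (E : Set Edge) (a b : Node) : Prop := ∃ l : Label, (a, l, b) ∈ E

/-- `T` is a document tree: the root is a node, edges connect nodes, every node has at
most one incoming edge, the root has none, and every node is reachable from the root
(edges are directed from parent to child). -/
def IsDT (T : Tree3) : Prop :=
  T.root ∈ T.N ∧
  (∀ e ∈ T.E, e.1 ∈ T.N ∧ e.2.2 ∈ T.N) ∧
  (∀ e ∈ T.E, ∀ e' ∈ T.E, e.2.2 = e'.2.2 → e = e') ∧
  (∀ e ∈ T.E, e.2.2 ≠ T.root) ∧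
  (∀ n ∈ T.N, Relation.ReflTransGen (estep (↑T.E)) T.root n)

/-! ## Update operations and queryless schedules -/

inductive Op where
  | add : Node → Label → Node → Op
  | del : Node → Label → Node → Op
deriving DecidableEq

/-- Apply an update operation to a tree; `none` when the operation is undefined. -/
noncomputable def applyOp (o : Op) (T : Tree3) : Option Tree3 :=
  match o with
  | Op.add m l n =>
      let T' : Tree3 := ⟨insert n T.N, insert (m, l, n) T.E, T.root⟩
      if (m, l, n) ∈ T.E ∨ ¬ IsDT T' then none else some T'
  | Op.del m l n =>
      let T' : Tree3 := ⟨T.N.erase n, T.E.erase (m, l, n), T.root⟩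
      if (m, l, n) ∉ T.E ∨ ¬ IsDT T' then none else some T'

/-- An action is an operation tagged with a transaction identifier. -/
abbrev QLAction := Op × ℕ

/-- A queryless (QL) schedule is a finite sequence of actions. -/
abbrev QLSchedule := List QLAction

/-- Apply a QL schedule to a tree, operation by operation. -/
noncomputable def applyQL : QLSchedule → Tree3 → Option Tree3
  | [], T => some T
  | a :: rest, T => (applyOp a.1 T).bind (applyQL rest)

/-- `S[T]` is defined (and `T` is a document tree). -/
def DefinedOn (S : QLSchedule) (T : Tree3) : Prop := IsDT T ∧ (applyQL S T).isSome

/-- A QL schedule is consistent iff it is defined on at least one document tree. -/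
def ConsistentQL (S : QLSchedule) : Prop := ∃ T, DefinedOn S T

def Op.src : Op → Node
  | Op.add m _ _ => m
  | Op.del m _ _ => m

def Op.tgt : Op → Node
  | Op.add _ _ n => n
  | Op.del _ _ n => n

def Op.edge : Op → Edge
  | Op.add m l n => (m, l, n)
  | Op.del m l n => (m, l, n)

/-- The list of operations of a QL schedule. -/
def ops (S : QLSchedule) : List Op := S.map Prod.fst

/-- The operation containing the first occurrence of the node `x` in `S`, if any. -/
def firstNodeOp (S : QLSchedule) (x : Node) : Option Op :=
  (ops S).find? (fun o => (o.src == x) || (o.tgt == x))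

/-- The operation containing the last occurrence of the node `x` in `S`, if any. -/
def lastNodeOp (S : QLSchedule) (x : Node) : Option Op :=
  (ops S).reverse.find? (fun o => (o.src == x) || (o.tgt == x))

/-- The operation containing the first occurrence of the edge `e` in `S`, if any. -/
def firstEdgeOp (S : QLSchedule) (e : Edge) : Option Op :=
  (ops S).find? (fun o => o.edge == e)

/-- The operation containing the last occurrence of the edge `e` in `S`, if any. -/
def lastEdgeOp (S : QLSchedule) (e : Edge) : Option Op :=
  (ops S).reverse.find? (fun o => o.edge == e)

/-- Some edge with target `x` occurs in `S`. -/
def occursTgt (S : QLSchedule) (x : Node) : Prop := ∃ o ∈ ops S, o.tgt = x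

/-- `N^min_I(S)`. -/
def NminI (S : QLSchedule) : Set Node :=
  {x | ∃ l n, firstNodeOp S x = some (Op.add x l n)} ∪
  {x | ∃ l n, firstNodeOp S x = some (Op.del x l n)} ∪
  {x | ∃ m l, firstNodeOp S x = some (Op.del m l x)}

/-- `N^max_I(S)`. -/
def NmaxI (S : QLSchedule) : Set Node :=
  {x | ¬ ∃ m l, firstNodeOp S x = some (Op.add m l x)}

/-- `E^min_I(S)`. -/
def EminI (S : QLSchedule) : Set Edge :=
  {e | firstEdgeOp S e = some (Op.del e.1 e.2.1 e.2.2)}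

/-- `E^max_I(S)`. -/
def EmaxI (S : QLSchedule) : Set Edge :=
  EminI S ∪ {e | ¬ occursTgt S e.1 ∧ ¬ occursTgt S e.2.2}

/-- `N^min_O(S)`. -/
def NminO (S : QLSchedule) : Set Node :=
  {x | ∃ l n, lastNodeOp S x = some (Op.del x l n)} ∪
  {x | ∃ l n, lastNodeOp S x = some (Op.add x l n)} ∪
  {x | ∃ m l, lastNodeOp S x = some (Op.add m l x)}

/-- `N^max_O(S)`. -/
def NmaxO (S : QLSchedule) : Set Node :=
  {x | ¬ ∃ m l, lastNodeOp S x = some (Op.del m l x)}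

/-- `E^min_O(S)`. -/
def EminO (S : QLSchedule) : Set Edge :=
  {e | lastEdgeOp S e = some (Op.add e.1 e.2.1 e.2.2)}

/-- `E^max_O(S)`. -/
def EmaxO (S : QLSchedule) : Set Edge :=
  EminO S ∪ {e | ¬ occursTgt S e.1 ∧ ¬ occursTgt S e.2.2}

/-- `ADD(S)`: edges whose last occurrence in `S` is an addition. -/
def ADDs (S : QLSchedule) : Set Edge :=
  {e | lastEdgeOp S e = some (Op.add e.1 e.2.1 e.2.2)}

/-- `DEL(S)`: edges whose last occurrence in `S` is a deletion. -/
def DELs (S : QLSchedule) : Set Edge :=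
  {e | lastEdgeOp S e = some (Op.del e.1 e.2.1 e.2.2)}

/-- `T` is a basic input tree of `S`. -/
def BasicInput (S : QLSchedule) (T : Tree3) : Prop :=
  IsDT T ∧ NminI S ⊆ ↑T.N ∧ ↑T.N ⊆ NmaxI S ∧ EminI S ⊆ ↑T.E ∧ ↑T.E ⊆ EmaxI S

/-- `T` is a basic output tree of `S`. -/
def BasicOutput (S : QLSchedule) (T : Tree3) : Prop :=
  IsDT T ∧ NminO S ⊆ ↑T.N ∧ ↑T.N ⊆ NmaxO S ∧ EminO S ⊆ ↑T.E ∧ ↑T.E ⊆ EmaxO S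

/-- The C-condition (nine clauses). -/
def CCond (S : QLSchedule) : Prop :=
  (∀ i j (n l₁ n₁ n₂ l₂ : ℕ), i < j →
      (ops S)[i]? = some (Op.add n l₁ n₁) → (ops S)[j]? = some (Op.add n₂ l₂ n) →
      ∃ k : ℕ, i < k ∧ k < j ∧ (ops S)[k]? = some (Op.del n l₁ n₁)) ∧
  (∀ i j (n₁ l₁ n n₂ l₂ : ℕ), i < j →
      (ops S)[i]? = some (Op.add n₁ l₁ n) → (ops S)[j]? = some (Op.add n₂ l₂ n) →
      ∃ k : ℕ, i < k ∧ k < j ∧ (ops S)[k]? = some (Op.del n₁ l₁ n)) ∧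
  (∀ i j (n l₁ n₁ n₂ l₂ : ℕ), i < j →
      (ops S)[i]? = some (Op.add n l₁ n₁) → (ops S)[j]? = some (Op.del n₂ l₂ n) →
      ∃ k : ℕ, i < k ∧ k < j ∧ (ops S)[k]? = some (Op.del n l₁ n₁)) ∧
  (∀ i j (n₁ l₁ n l₂ n₂ : ℕ), i < j →
      (ops S)[i]? = some (Op.add n₁ l₁ n) → (ops S)[j]? = some (Op.del n l₂ n₂) →
      ∃ k : ℕ, i < k ∧ k < j ∧ (ops S)[k]? = some (Op.add n l₂ n₂)) ∧
  (∀ i j (n₁ l₁ n n₂ l₂ : ℕ), i < j → (n₁, l₁) ≠ (n₂, l₂) →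
      (ops S)[i]? = some (Op.add n₁ l₁ n) → (ops S)[j]? = some (Op.del n₂ l₂ n) →
      ∃ k : ℕ, i < k ∧ k < j ∧ (ops S)[k]? = some (Op.del n₁ l₁ n)) ∧
  (∀ i j (n l₁ n₁ n₂ l₂ : ℕ), i < j →
      (ops S)[i]? = some (Op.del n l₁ n₁) → (ops S)[j]? = some (Op.add n₂ l₂ n) →
      ∃ k : ℕ, ∃ n₃ l₃ : ℕ, i < k ∧ k < j ∧ (ops S)[k]? = some (Op.del n₃ l₃ n)) ∧
  (∀ i j (n₁ l₁ n l₂ n₂ : ℕ), i < j →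
      (ops S)[i]? = some (Op.del n₁ l₁ n) → (ops S)[j]? = some (Op.add n l₂ n₂) →
      ∃ k : ℕ, ∃ n₃ l₃ : ℕ, i < k ∧ k < j ∧ (ops S)[k]? = some (Op.add n₃ l₃ n)) ∧
  (∀ i j (n₁ l₁ n l₂ n₂ : ℕ), i < j →
      (ops S)[i]? = some (Op.del n₁ l₁ n) → (ops S)[j]? = some (Op.del n l₂ n₂) →
      ∃ k : ℕ, ∃ n₃ l₃ : ℕ, i < k ∧ k < j ∧ (ops S)[k]? = some (Op.add n₃ l₃ n)) ∧
  (∀ i j (n₁ l₁ n n₂ l₂ : ℕ), i < j →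
      (ops S)[i]? = some (Op.del n₁ l₁ n) → (ops S)[j]? = some (Op.del n₂ l₂ n) →
      ∃ k : ℕ, i < k ∧ k < j ∧ (ops S)[k]? = some (Op.add n₂ l₂ n))

/-! ## Transactions, equivalence and serializability of QL schedules -/

/-- Two QL schedules are interleavings of the same set of transactions: for every
transaction identifier, the subsequences of actions with that identifier coincide. -/
def SameTrans (S S' : QLSchedule) : Prop :=
  ∀ t : ℕ, S.filter (fun a => a.2 == t) = S'.filter (fun a => a.2 == t)

/-- A schedule is serial iff the actions of each transaction occur consecutively. -/
def Serial (S : QLSchedule) : Prop :=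
  ∀ i j k : ℕ, i ≤ j → j ≤ k →
    ∀ a b c : QLAction, S[i]? = some a → S[j]? = some b → S[k]? = some c →
      a.2 = c.2 → b.2 = a.2

/-- Two QL schedules are equivalent: they are defined on the same non-empty set of
document trees and produce the same output tree on each of them. -/
def EquivQL (S S' : QLSchedule) : Prop :=
  (∃ T, DefinedOn S T) ∧ ∀ T, IsDT T → applyQL S T = applyQL S' T

/-- A QL schedule is serializable iff it is equivalent to a serial schedule over the
same set of transactions. -/
def SerializableQL (S : QLSchedule) : Prop :=
  ∃ S', Serial S' ∧ SameTrans S S' ∧ EquivQL S S'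

/-! ## Paths and forests -/

/-- `SPath G m lp n`: there is a directed path from `m` to `n` in the edge set `G`
whose label path is `lp`. -/
inductive SPath (G : Set Edge) : Node → List Label → Node → Prop where
  | nil (n : Node) : SPath G n [] n
  | cons {m n n' : Node} {l : Label} {lp : List Label} :
      (m, l, n) ∈ G → SPath G n lp n' → SPath G m (l :: lp) n'

/-- A set of edges is a forest: no two distinct edges share a target, and
there is no (non-trivial) directed cycle. -/
def IsForest (G : Set Edge) : Prop :=
  (∀ e ∈ G, ∀ e' ∈ G, e.2.2 = e'.2.2 → e = e') ∧
  ¬ ∃ (n : Node) (lp : List Label), lp ≠ [] ∧ SPath G n lp n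

/-! ## Path expressions -/

inductive Step where
  | star : Step
  | lab : Label → Step
deriving DecidableEq

/-- Path expressions: `ε`, `pe/f` and `pe//f` (a single step `f` is `ε/f`). -/
inductive PathExpr where
  | eps : PathExpr
  | child : PathExpr → Step → PathExpr
  | desc : PathExpr → Step → PathExpr
deriving DecidableEq

def Step.mtch : Step → Label → Prop
  | Step.star, _ => True
  | Step.lab l, l' => l = l'

def Step.mtchB : Step → Label → Bool
  | Step.star, _ => true
  | Step.lab l, l' => l == l'

/-- The set `L(pe)` of label paths represented by a path expression
(a label path is a list of labels). -/
def PathExpr.lang : PathExpr → Set (List Label)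
  | PathExpr.eps => {[]}
  | PathExpr.child pe f => {w | ∃ u l, u ∈ pe.lang ∧ f.mtch l ∧ w = u ++ [l]}
  | PathExpr.desc pe f => {w | ∃ u v l, u ∈ pe.lang ∧ f.mtch l ∧ w = u ++ v ++ [l]}

/-- `SOP` on a *reversed* label path. -/
def SOPr : PathExpr → List Label → Set PathExpr
  | pe, [] => {pe}
  | PathExpr.eps, _ :: _ => ∅
  | PathExpr.child pe f, l :: lp => if f.mtchB l then SOPr pe lp else ∅
  | PathExpr.desc pe f, l :: lp =>
      if f.mtchB l then SOPr pe lp ∪ SOPr (PathExpr.desc pe Step.star) lp else ∅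
termination_by pe lp => lp.length

/-- `SOP(pe)_lp`: the set of non-empty `lp`-prefixes of `pe`. -/
def SOP (pe : PathExpr) (lp : List Label) : Set PathExpr := SOPr pe lp.reverse

/-- `L(SOP(pe)_lp)`. -/
def LSOP (pe : PathExpr) (lp : List Label) : Set (List Label) :=
  ⋃ pe' ∈ SOP pe lp, pe'.lang

/-- `pe/lp`: append a label path to a path expression with `/` separators. -/
def PathExpr.appendLP : PathExpr → List Label → PathExpr
  | pe, [] => pe
  | pe, l :: lp => PathExpr.appendLP (PathExpr.child pe (Step.lab l)) lp

/-- The prefixes of a path expression (including `ε`). -/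
def PathExpr.prefixes : PathExpr → Set PathExpr
  | PathExpr.eps => {PathExpr.eps}
  | PathExpr.child pe f => insert (PathExpr.child pe f) pe.prefixes
  | PathExpr.desc pe f => insert (PathExpr.desc pe f) pe.prefixes

/-! ## Schedules with queries -/

inductive GOp where
  | query : Node → PathExpr → GOp
  | add : Node → Label → Node → GOp
  | del : Node → Label → Node → GOp

abbrev GAction := GOp × ℕ

/-- A (general) schedule is a finite sequence of query/add/del actions. -/
abbrev Schedule := List GAction

def GOp.toOp? : GOp → Option Op
  | GOp.query _ _ => none
  | GOp.add m l n => some (Op.add m l n)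
  | GOp.del m l n => some (Op.del m l n)

/-- The QL schedule of a schedule: remove all query actions. -/
def qlOf (S : Schedule) : QLSchedule :=
  S.filterMap (fun a => (a.1.toOp?).map (fun o => (o, a.2)))

/-- The answer of `query(n,pe)` on a tree `T`. -/
def queryAnswer (n : Node) (pe : PathExpr) (T : Tree3) : Set Node :=
  {n' | n' ∈ T.N ∧ ∃ lp, SPath (↑T.E) n lp n' ∧ lp ∈ pe.lang}

/-- A schedule is consistent iff its QL schedule is. -/
def ConsistentSched (S : Schedule) : Prop := ConsistentQL (qlOf S)

/-- Run a schedule on a tree: the final tree together with, for each query (in order),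
its transaction identifier and its answer; `none` if some update is undefined. -/
noncomputable def runQ : Schedule → Tree3 → Option (Tree3 × List (ℕ × Set Node))
  | [], T => some (T, [])
  | (GOp.query n pe, t) :: rest, T =>
      (runQ rest T).map (fun p => (p.1, (t, queryAnswer n pe T) :: p.2))
  | (GOp.add m l n, _) :: rest, T =>
      (applyOp (Op.add m l n) T).bind (runQ rest)
  | (GOp.del m l n, _) :: rest, T =>
      (applyOp (Op.del m l n) T).bind (runQ rest)

/-- Two schedules are equivalent: defined on the same non-empty set of document trees,
and on each such tree they produce the same output tree and, per transaction, the same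
sequence of query answers. -/
def EquivSched (S₁ S₂ : Schedule) : Prop :=
  (∃ T, IsDT T ∧ (runQ S₁ T).isSome) ∧
  ∀ T, IsDT T →
    ((runQ S₁ T).isSome ↔ (runQ S₂ T).isSome) ∧
    ∀ p₁ p₂, runQ S₁ T = some p₁ → runQ S₂ T = some p₂ →
      p₁.1 = p₂.1 ∧
      ∀ t : ℕ, (p₁.2.filter (fun x => x.1 == t)).map Prod.snd
             = (p₂.2.filter (fun x => x.1 == t)).map Prod.snd

/-- Two schedules are interleavings of the same set of transactions. -/
def SameTransG (S S' : Schedule) : Prop :=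
  ∀ t : ℕ, S.filter (fun a => a.2 == t) = S'.filter (fun a => a.2 == t)

/-- A schedule is serial iff the actions of each transaction occur consecutively. -/
def SerialG (S : Schedule) : Prop :=
  ∀ i j k : ℕ, i ≤ j → j ≤ k →
    ∀ a b c : GAction, S[i]? = some a → S[j]? = some b → S[k]? = some c →
      a.2 = c.2 → b.2 = a.2

/-- A schedule is serializable iff it is equivalent to a serial schedule over the same
set of transactions. -/
def SerializableSched (S : Schedule) : Prop :=
  ∃ S', SerialG S' ∧ SameTransG S S' ∧ EquivSched S S'

/-- `E^min(S^Q)` where `Q` is the action at position `i` of `S`. -/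
def EminSQ (S : Schedule) (i : ℕ) : Set Edge :=
  (EminI (qlOf S) \ DELs (qlOf (S.take i))) ∪ ADDs (qlOf (S.take i))

/-- `E^max(S^Q)` where `Q` is the action at position `i` of `S`. -/
def EmaxSQ (S : Schedule) (i : ℕ) : Set Edge :=
  (EmaxI (qlOf S) \ DELs (qlOf (S.take i))) ∪ ADDs (qlOf (S.take i))

/-- `x` is a non-building-node of `S`: some `add(m,l,x)` or `del(m,l,x)` occurs in `S`. -/
def NonBuilding (S : Schedule) (x : Node) : Prop :=
  ∃ a ∈ S, ∃ m l, a.1 = GOp.add m l x ∨ a.1 = GOp.del m l x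

/-- `x` is a node of the graph (edge set) `G`. -/
def NodeOfGraph (G : Set Edge) (x : Node) : Prop := ∃ e ∈ G, e.1 = x ∨ e.2.2 = x

/-- `x` has a parent in the edge set `G`. -/
def HasParent (G : Set Edge) (x : Node) : Prop := ∃ e ∈ G, e.2.2 = x

/-- `PQRN(S,Q)` for the query `Q = query(n,pe)` at position `i` of `S`:
the nodes `m` of the graph `E^min(S^Q)` that are non-building-nodes, whose root
ancestor `r` in the forest `E^min(S^Q)` (the node with no parent from which `m` is
reachable, via the label path `ALabel(S^Q,m)`) is a building-node different from `n`,
and such that `L(SOP(pe)_{ALabel(S^Q,m)}) ≠ ∅`. -/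
def PQRN (S : Schedule) (i : ℕ) (n : Node) (pe : PathExpr) : Set Node :=
  {m | NodeOfGraph (EminSQ S i) m ∧ NonBuilding S m ∧
       ∃ r lp, SPath (EminSQ S i) r lp m ∧ ¬ HasParent (EminSQ S i) r ∧
         ¬ NonBuilding S r ∧ r ≠ n ∧ LSOP pe lp ≠ ∅}

/-- The answer of the query at position `i` of `S` when `S` is applied to `T`
(the query is evaluated on the tree obtained by applying the actions before it). -/
noncomputable def answerAt (S : Schedule) (i : ℕ) (T : Tree3) : Option (Set Node) :=
  match S[i]? with
  | some (GOp.query n pe, _) => (applyQL (qlOf (S.take i)) T).map (queryAnswer n pe)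
  | _ => none

/-!
A schedule that is defined on some document tree is defined on exactly the trees `T` with
`N^min_I ⊆ T.N ⊆ N^max_I` and `E^min_I ⊆ T.E ⊆ E^max_I`: these conditions only constrain
what the schedule mentions, and one step of the schedule carries them over to its remainder.
Undoing a schedule (inverse operations in reverse order) swaps input and output sets, so a
consistent schedule produces exactly the trees meeting its output conditions. Hence `S₁.S₂` is
consistent iff some tree is a basic output tree of `S₁` and a basic input tree of `S₂`. The four
inclusions are plainly necessary for that. Conversely they make `E^min_O(S₁) ∪ E^min_I(S₂)` a
forest on nodes allowed by both schedules, and hanging it under a fresh root gives such a tree.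
-/

namespace Op

lemma edge_fst (o : Op) : o.edge.1 = o.src := by cases o <;> rfl

lemma edge_snd_snd (o : Op) : o.edge.2.2 = o.tgt := by cases o <;> rfl

def Mentions (o : Op) (x : Node) : Prop := o.src = x ∨ o.tgt = x

lemma mentions_of_edge_eq {o o' : Op} {x : Node} (h : o.edge = o'.edge) (hx : o'.Mentions x) :
    o.Mentions x := by
  rwa [Mentions, ← edge_fst, ← edge_snd_snd, h, edge_fst, edge_snd_snd]

end Op

section Occurrences

variable {S : QLSchedule} {a : QLAction} {x : Node} {e : Edge} {o : Op}

lemma firstNodeOp_cons_of_mentions (h : a.1.Mentions x) : firstNodeOp (a :: S) x = some a.1 :=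
  List.find?_cons_of_pos (by simpa [Op.Mentions] using h)

lemma firstNodeOp_cons_of_not_mentions (h : ¬ a.1.Mentions x) :
    firstNodeOp (a :: S) x = firstNodeOp S x :=
  List.find?_cons_of_neg (by simpa [Op.Mentions] using h)

lemma firstEdgeOp_cons_of_eq (h : a.1.edge = e) : firstEdgeOp (a :: S) e = some a.1 :=
  List.find?_cons_of_pos (by simp [h])

lemma firstEdgeOp_cons_of_ne (h : a.1.edge ≠ e) : firstEdgeOp (a :: S) e = firstEdgeOp S e :=
  List.find?_cons_of_neg (by simp [h])

lemma mentions_of_firstNodeOp (h : firstNodeOp S x = some o) : o ∈ ops S ∧ o.Mentions x := by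
  simpa [Op.Mentions] using And.intro (List.mem_of_find?_eq_some h) (List.find?_some h)

lemma mentions_of_lastNodeOp (h : lastNodeOp S x = some o) : o ∈ ops S ∧ o.Mentions x := by
  simpa [Op.Mentions] using And.intro (List.mem_of_find?_eq_some h) (List.find?_some h)

lemma edge_eq_of_firstEdgeOp (h : firstEdgeOp S e = some o) : o ∈ ops S ∧ o.edge = e := by
  simpa using And.intro (List.mem_of_find?_eq_some h) (List.find?_some h)

lemma edge_eq_of_lastEdgeOp (h : lastEdgeOp S e = some o) : o ∈ ops S ∧ o.edge = e := by
  simpa using And.intro (List.mem_of_find?_eq_some h) (List.find?_some h)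

lemma occursTgt_cons : occursTgt (a :: S) x ↔ a.1.tgt = x ∨ occursTgt S x := by
  simp [occursTgt, ops]

lemma not_occursTgt_nil : ¬ occursTgt [] x := by
  simp [occursTgt, ops]

lemma firstEdgeOp_edge_of_firstNodeOp (h : firstNodeOp S x = some o) :
    firstEdgeOp S o.edge = some o := by
  induction S with
  | nil => cases h
  | cons a S ih =>
    by_cases hm : a.1.Mentions x
    · rw [firstNodeOp_cons_of_mentions hm, Option.some.injEq] at h
      exact h ▸ firstEdgeOp_cons_of_eq rfl
    · rw [firstNodeOp_cons_of_not_mentions hm] at h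
      have hne : a.1.edge ≠ o.edge := fun he =>
        hm (Op.mentions_of_edge_eq he (mentions_of_firstNodeOp h).2)
      rw [firstEdgeOp_cons_of_ne hne, ih h]

lemma exists_firstNodeOp_of_occursTgt (h : occursTgt S x) : ∃ o, firstNodeOp S x = some o := by
  obtain ⟨o, ho, rfl⟩ := h
  exact List.find?_isSome.2 ⟨o, ho, by simp⟩ |> Option.isSome_iff_exists.1

end Occurrences

section Trees

variable {G G' : Set Edge} {T : Tree3} {e e' : Edge} {m n x : Node} {l : Label}

lemma SPath.mono (h : G ⊆ G') {a b : Node} {lp : List Label} (hp : SPath G a lp b) :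
    SPath G' a lp b := by
  induction hp with
  | nil n => exact .nil n
  | cons he _ ih => exact .cons (h he) ih

lemma SPath.snoc {a b : Node} {lp : List Label} (hp : SPath G a lp b) (he : (b, l, x) ∈ G) :
    SPath G a (lp ++ [l]) x := by
  induction hp with
  | nil n => exact .cons he (.nil x)
  | cons he' _ ih => exact .cons he' (ih he)

lemma SPath.exists_last {a c : Node} {lp : List Label} (hp : SPath G a lp c) (hne : lp ≠ []) :
    ∃ lp' l b, lp = lp' ++ [l] ∧ SPath G a lp' b ∧ (b, l, c) ∈ G := by
  induction hp with
  | nil n => exact absurd rfl hne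
  | @cons m n n' l lp he hp ih =>
    rcases eq_or_ne lp [] with rfl | hlp
    · cases hp
      exact ⟨[], l, m, rfl, .nil m, he⟩
    · obtain ⟨lp', l', b, rfl, hp', he'⟩ := ih hlp
      exact ⟨l :: lp', l', b, rfl, .cons he hp', he'⟩

lemma IsForest.mono (h : G ⊆ G') (hG' : IsForest G') : IsForest G :=
  ⟨fun e he e' he' => hG'.1 e (h he) e' (h he'),
    fun ⟨n, lp, hne, hp⟩ => hG'.2 ⟨n, lp, hne, hp.mono h⟩⟩

namespace IsDT

lemma endpoints_mem (hT : IsDT T) (he : e ∈ T.E) : e.1 ∈ T.N ∧ e.2.2 ∈ T.N := hT.2.1 e he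

lemma eq_of_tgt_eq (hT : IsDT T) (he : e ∈ T.E) (he' : e' ∈ T.E) (h : e.2.2 = e'.2.2) :
    e = e' :=
  hT.2.2.1 e he e' he' h

lemma tgt_ne_root (hT : IsDT T) (he : e ∈ T.E) : e.2.2 ≠ T.root := hT.2.2.2.1 e he

lemma reach (hT : IsDT T) (hn : n ∈ T.N) : Relation.ReflTransGen (estep ↑T.E) T.root n :=
  hT.2.2.2.2 n hn

lemma exists_parent (hT : IsDT T) (hn : n ∈ T.N) (hr : n ≠ T.root) :
    ∃ m l, (m, l, n) ∈ T.E := by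
  rcases Relation.ReflTransGen.cases_tail (hT.reach hn) with h | ⟨c, _, l, hc⟩
  · exact absurd h hr
  · exact ⟨c, l, hc⟩

lemma isForest (hT : IsDT T) : IsForest (↑T.E : Set Edge) := by
  refine ⟨fun e he e' he' => hT.eq_of_tgt_eq he he', ?_⟩
  suffices h : ∀ y, Relation.ReflTransGen (estep ↑T.E) T.root y →
      ∀ lp, lp ≠ [] → ¬ SPath (↑T.E) y lp y by
    rintro ⟨n, lp, hne, hp⟩
    cases hp with
    | nil => exact hne rfl
    | cons he hp => exact h n (hT.reach (hT.endpoints_mem he).1) _ hne (.cons he hp)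
  intro y hy
  induction hy with
  | refl =>
    intro lp hne hp
    obtain ⟨_, _, _, _, _, he⟩ := hp.exists_last hne
    exact hT.tgt_ne_root he rfl
  | @tail b c _ hbc ih =>
    -- a cycle through `c` must enter `c` through its unique parent `b`, so rotate it to `b`
    intro lp hne hp
    obtain ⟨lp', l, b', rfl, hp', he⟩ := hp.exists_last hne
    obtain ⟨l₀, he₀⟩ := hbc
    obtain rfl : b' = b := congrArg Prod.fst (hT.eq_of_tgt_eq he he₀ rfl)
    exact ih (l :: lp') (List.cons_ne_nil _ _) (.cons he hp')

lemma self_loop_not_mem (hT : IsDT T) : (n, l, n) ∉ T.E := fun h =>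
  hT.isForest.2 ⟨n, [l], List.cons_ne_nil _ _, .cons h (.nil n)⟩

lemma insert_leaf (hT : IsDT T) (hm : m ∈ T.N) (hn : n ∉ T.N) :
    IsDT ⟨insert n T.N, insert (m, l, n) T.E, T.root⟩ := by
  have fresh : ∀ e ∈ T.E, e.2.2 ≠ n := fun e he h => hn (h ▸ (hT.endpoints_mem he).2)
  have mono : ∀ y, Relation.ReflTransGen (estep ↑T.E) T.root y →
      Relation.ReflTransGen (estep ↑(insert (m, l, n) T.E)) T.root y := fun y =>
    Relation.ReflTransGen.mono (fun _ _ ⟨l', h⟩ => ⟨l', Finset.mem_insert_of_mem h⟩) _ _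
  refine ⟨Finset.mem_insert_of_mem hT.1, fun e he => ?_, fun e he e' he' h => ?_, fun e he => ?_,
    fun y hy => ?_⟩
  · rcases Finset.mem_insert.1 he with rfl | he
    · exact ⟨Finset.mem_insert_of_mem hm, Finset.mem_insert_self _ _⟩
    · exact ⟨Finset.mem_insert_of_mem (hT.endpoints_mem he).1,
        Finset.mem_insert_of_mem (hT.endpoints_mem he).2⟩
  · rcases Finset.mem_insert.1 he with rfl | he <;> rcases Finset.mem_insert.1 he' with rfl | he'
    exacts [rfl, absurd h.symm (fresh _ he'), absurd h (fresh _ he), hT.eq_of_tgt_eq he he' h]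
  · rcases Finset.mem_insert.1 he with rfl | he
    exacts [fun h : n = T.root => hn (h ▸ hT.1), hT.tgt_ne_root he]
  · rcases Finset.mem_insert.1 hy with rfl | hy
    exacts [(mono m (hT.reach hm)).tail ⟨l, Finset.mem_insert_self _ _⟩,
      mono y (hT.reach hy)]

lemma erase_leaf (hT : IsDT T) (he : (m, l, n) ∈ T.E) (hleaf : ∀ l' p, (n, l', p) ∉ T.E) :
    IsDT ⟨T.N.erase n, T.E.erase (m, l, n), T.root⟩ := by
  have not_src : ∀ e ∈ T.E, e.1 ≠ n := fun e he h => hleaf e.2.1 e.2.2 (h ▸ he)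
  have not_tgt : ∀ e ∈ T.E.erase (m, l, n), e.2.2 ≠ n := fun e he' h =>
    (Finset.mem_erase.1 he').1 (hT.eq_of_tgt_eq (Finset.mem_of_mem_erase he') he h)
  refine ⟨Finset.mem_erase.2 ⟨(hT.tgt_ne_root he).symm, hT.1⟩, fun e he' => ?_,
    fun e he' e' he'' =>
      hT.eq_of_tgt_eq (Finset.mem_of_mem_erase he') (Finset.mem_of_mem_erase he''),
    fun e he' => hT.tgt_ne_root (Finset.mem_of_mem_erase he'), fun x hx => ?_⟩
  · have hends := hT.endpoints_mem (Finset.mem_of_mem_erase he')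
    exact ⟨Finset.mem_erase.2 ⟨not_src e (Finset.mem_of_mem_erase he'), hends.1⟩,
      Finset.mem_erase.2 ⟨not_tgt e he', hends.2⟩⟩
  · obtain ⟨hxn, hx⟩ := Finset.mem_erase.1 hx
    -- no path from the root passes through the leaf `n`
    suffices h : ∀ y, Relation.ReflTransGen (estep ↑T.E) T.root y → y ≠ n →
        Relation.ReflTransGen (estep ↑(T.E.erase (m, l, n))) T.root y from
      h x (hT.reach hx) hxn
    intro y hy
    induction hy with
    | refl => exact fun _ => .refl
    | @tail b c _ hbc ih =>
      intro hc
      obtain ⟨l', hbc⟩ := hbc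
      have hne : (b, l', c) ≠ (m, l, n) := fun h => hc (congrArg (·.2.2) h)
      exact (ih (not_src _ hbc)).tail ⟨l', Finset.mem_erase.2 ⟨hne, hbc⟩⟩

end IsDT

end Trees

section Apply

variable {T T₁ X : Tree3} {m n x : Node} {l : Label} {e : Edge} {o : Op}

lemma applyOp_add_eq_some_iff (hT : IsDT T) :
    applyOp (.add m l n) T = some X ↔
      m ∈ T.N ∧ n ∉ T.N ∧ X = ⟨insert n T.N, insert (m, l, n) T.E, T.root⟩ := by
  simp only [applyOp, Option.ite_none_left_eq_some, Option.some.injEq, not_or, not_not]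
  constructor
  · rintro ⟨⟨hnew, hX⟩, rfl⟩
    have hmn : m ≠ n := by
      rintro rfl
      exact hX.self_loop_not_mem (Finset.mem_insert_self _ _)
    have hn : n ∉ T.N := by
      intro hn
      have hr : n ≠ T.root := hX.tgt_ne_root (Finset.mem_insert_self (m, l, n) T.E)
      obtain ⟨m', l', he⟩ := hT.exists_parent hn hr
      exact hnew
        (hX.eq_of_tgt_eq (Finset.mem_insert_of_mem he) (Finset.mem_insert_self _ _) rfl ▸ he)
    have hm := (hX.endpoints_mem (Finset.mem_insert_self (m, l, n) T.E)).1
    exact ⟨(Finset.mem_insert.1 hm).resolve_left hmn, hn, rfl⟩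
  · rintro ⟨hm, hn, rfl⟩
    exact ⟨⟨fun he => hn (hT.endpoints_mem he).2, hT.insert_leaf hm hn⟩, rfl⟩

lemma applyOp_del_eq_some_iff (hT : IsDT T) :
    applyOp (.del m l n) T = some X ↔
      (m, l, n) ∈ T.E ∧ (∀ l' p, (n, l', p) ∉ T.E) ∧
        X = ⟨T.N.erase n, T.E.erase (m, l, n), T.root⟩ := by
  simp only [applyOp, Option.ite_none_left_eq_some, Option.some.injEq, not_or, not_not]
  constructor
  · rintro ⟨⟨he, hX⟩, rfl⟩
    refine ⟨he, fun l' p hp => ?_, rfl⟩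
    have hne : (n, l', p) ≠ (m, l, n) := by
      intro h
      obtain rfl : n = m := congrArg Prod.fst h
      exact hT.self_loop_not_mem he
    have := (hX.endpoints_mem (Finset.mem_erase.2 ⟨hne, hp⟩)).1
    exact (Finset.mem_erase.1 this).1 rfl
  · rintro ⟨he, hleaf, rfl⟩
    exact ⟨⟨he, hT.erase_leaf he hleaf⟩, rfl⟩

lemma isDT_of_applyOp (hT : IsDT T) (h : applyOp o T = some T₁) : IsDT T₁ := by
  cases o with
  | add => obtain ⟨hm, hn, rfl⟩ := (applyOp_add_eq_some_iff hT).1 h; exact hT.insert_leaf hm hn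
  | del => obtain ⟨he, hl, rfl⟩ := (applyOp_del_eq_some_iff hT).1 h; exact hT.erase_leaf he hl

lemma root_applyOp (hT : IsDT T) (h : applyOp o T = some T₁) : T₁.root = T.root := by
  cases o with
  | add => obtain ⟨-, -, rfl⟩ := (applyOp_add_eq_some_iff hT).1 h; rfl
  | del => obtain ⟨-, -, rfl⟩ := (applyOp_del_eq_some_iff hT).1 h; rfl

lemma tgt_ne_root_of_applyOp (hT : IsDT T) (h : applyOp o T = some T₁) : o.tgt ≠ T.root := by
  cases o with
  | add m l n =>
    obtain ⟨-, hn, -⟩ := (applyOp_add_eq_some_iff hT).1 h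
    exact fun hr : n = T.root => hn (hr ▸ hT.1)
  | del => obtain ⟨he, -, -⟩ := (applyOp_del_eq_some_iff hT).1 h; exact hT.tgt_ne_root he

lemma mem_N_applyOp_iff (hT : IsDT T) (h : applyOp o T = some T₁) (hx : o.tgt ≠ x) :
    x ∈ T₁.N ↔ x ∈ T.N := by
  cases o with
  | add m l n =>
    obtain ⟨-, -, rfl⟩ := (applyOp_add_eq_some_iff hT).1 h
    simp [Ne.symm (show n ≠ x from hx)]
  | del m l n =>
    obtain ⟨-, -, rfl⟩ := (applyOp_del_eq_some_iff hT).1 h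
    simp [Ne.symm (show n ≠ x from hx)]

lemma mem_E_applyOp_iff (hT : IsDT T) (h : applyOp o T = some T₁) (he : o.edge ≠ e) :
    e ∈ T₁.E ↔ e ∈ T.E := by
  cases o with
  | add m l n =>
    obtain ⟨-, -, rfl⟩ := (applyOp_add_eq_some_iff hT).1 h
    simp [Ne.symm (show (m, l, n) ≠ e from he)]
  | del m l n =>
    obtain ⟨-, -, rfl⟩ := (applyOp_del_eq_some_iff hT).1 h
    simp [Ne.symm (show (m, l, n) ≠ e from he)]

lemma tgt_not_mem_edge_of_applyOp (hT : IsDT T) (h : applyOp o T = some T₁) (he : e ∈ T.E)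
    (hne : o.edge ≠ e) : o.tgt ≠ e.1 ∧ o.tgt ≠ e.2.2 := by
  cases o with
  | add m l n =>
    obtain ⟨-, hn, -⟩ := (applyOp_add_eq_some_iff hT).1 h
    exact ⟨fun h : n = e.1 => hn (h ▸ (hT.endpoints_mem he).1),
      fun h : n = e.2.2 => hn (h ▸ (hT.endpoints_mem he).2)⟩
  | del m l n =>
    obtain ⟨hmem, hleaf, -⟩ := (applyOp_del_eq_some_iff hT).1 h
    exact ⟨fun h : n = e.1 => hleaf e.2.1 e.2.2 (h ▸ he),
      fun h => hne (hT.eq_of_tgt_eq hmem he h)⟩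

lemma mem_N_applyOp_iff_of_mentions {T' T₁' : Tree3} (hT : IsDT T) (hT' : IsDT T')
    (h : applyOp o T = some T₁) (h' : applyOp o T' = some T₁') (hx : o.Mentions x) :
    x ∈ T₁.N ↔ x ∈ T₁'.N := by
  cases o with
  | add m l n =>
    obtain ⟨hm, -, rfl⟩ := (applyOp_add_eq_some_iff hT).1 h
    obtain ⟨hm', -, rfl⟩ := (applyOp_add_eq_some_iff hT').1 h'
    obtain rfl | rfl : m = x ∨ n = x := hx <;> simp [hm, hm']
  | del m l n =>
    obtain ⟨he, -, rfl⟩ := (applyOp_del_eq_some_iff hT).1 h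
    obtain ⟨he', -, rfl⟩ := (applyOp_del_eq_some_iff hT').1 h'
    have hmn : m ≠ n := fun h => hT.self_loop_not_mem (h ▸ he)
    obtain rfl | rfl : m = x ∨ n = x := hx
    · simp [hmn, (hT.endpoints_mem he).1, (hT'.endpoints_mem he').1]
    · simp

lemma edge_mem_applyOp_iff {T' T₁' : Tree3} (hT : IsDT T) (hT' : IsDT T')
    (h : applyOp o T = some T₁) (h' : applyOp o T' = some T₁') :
    o.edge ∈ T₁.E ↔ o.edge ∈ T₁'.E := by
  cases o with
  | add =>
    obtain ⟨-, -, rfl⟩ := (applyOp_add_eq_some_iff hT).1 h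
    obtain ⟨-, -, rfl⟩ := (applyOp_add_eq_some_iff hT').1 h'
    simp [Op.edge]
  | del =>
    obtain ⟨-, -, rfl⟩ := (applyOp_del_eq_some_iff hT).1 h
    obtain ⟨-, -, rfl⟩ := (applyOp_del_eq_some_iff hT').1 h'
    simp [Op.edge]

lemma applyQL_append (S₁ S₂ : QLSchedule) (T : Tree3) :
    applyQL (S₁ ++ S₂) T = (applyQL S₁ T).bind (applyQL S₂) := by
  induction S₁ generalizing T with
  | nil => rfl
  | cons a S ih =>
    simp only [List.cons_append, applyQL]
    cases applyOp a.1 T <;> simp [ih]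

lemma applyQL_cons_isSome {a : QLAction} {S : QLSchedule} :
    (applyQL (a :: S) T).isSome ↔
      ∃ T₁, applyOp a.1 T = some T₁ ∧ (applyQL S T₁).isSome := by
  simp only [applyQL]
  cases applyOp a.1 T <;> simp

lemma isDT_of_applyQL {S : QLSchedule} (hT : IsDT T) (h : applyQL S T = some T₁) : IsDT T₁ := by
  induction S generalizing T with
  | nil => cases h; exact hT
  | cons a S ih =>
    simp only [applyQL] at h
    cases ha : applyOp a.1 T with
    | none => simp [ha] at h
    | some T' => rw [ha] at h; exact ih (isDT_of_applyOp hT ha) h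

end Apply

section BasicInput

variable {S : QLSchedule} {a : QLAction} {T : Tree3} {x : Node} {e : Edge}

lemma mem_NminI_cons_of_not_mentions (h : ¬ a.1.Mentions x) :
    x ∈ NminI (a :: S) ↔ x ∈ NminI S := by
  simp only [NminI, Set.mem_union, Set.mem_ofPred_eq, firstNodeOp_cons_of_not_mentions h]

lemma mem_NmaxI_cons_of_not_mentions (h : ¬ a.1.Mentions x) :
    x ∈ NmaxI (a :: S) ↔ x ∈ NmaxI S := by
  simp only [NmaxI, Set.mem_ofPred_eq, firstNodeOp_cons_of_not_mentions h]

lemma mem_EminI_cons_of_ne (h : a.1.edge ≠ e) : e ∈ EminI (a :: S) ↔ e ∈ EminI S := by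
  simp only [EminI, Set.mem_ofPred_eq, firstEdgeOp_cons_of_ne h]

lemma mem_EmaxI_of_mem_EmaxI_cons (h : a.1.edge ≠ e) (he : e ∈ EmaxI (a :: S)) :
    e ∈ EmaxI S := by
  rcases he with he | ⟨h1, h2⟩
  · exact .inl ((mem_EminI_cons_of_ne h).1 he)
  · exact .inr ⟨fun h => h1 (occursTgt_cons.2 (.inr h)),
      fun h => h2 (occursTgt_cons.2 (.inr h))⟩

lemma NminI_subset_of_isSome (hT : IsDT T) (hS : (applyQL S T).isSome) : NminI S ⊆ T.N := by
  induction S generalizing T with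
  | nil => rintro x ((⟨_, _, ⟨⟩⟩ | ⟨_, _, ⟨⟩⟩) | ⟨_, _, ⟨⟩⟩)
  | cons a S ih =>
    obtain ⟨T₁, ha, hS⟩ := applyQL_cons_isSome.1 hS
    intro x hx
    by_cases hm : a.1.Mentions x
    · simp only [NminI, Set.mem_union, Set.mem_ofPred_eq, firstNodeOp_cons_of_mentions hm,
        Option.some.injEq] at hx
      rcases hx with (⟨l, n, h⟩ | ⟨l, n, h⟩) | ⟨m, l, h⟩ <;> rw [h] at ha
      · exact ((applyOp_add_eq_some_iff hT).1 ha).1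
      · exact (hT.endpoints_mem ((applyOp_del_eq_some_iff hT).1 ha).1).1
      · exact (hT.endpoints_mem ((applyOp_del_eq_some_iff hT).1 ha).1).2
    · rw [mem_NminI_cons_of_not_mentions hm] at hx
      exact (mem_N_applyOp_iff hT ha fun h => hm (.inr h)).1 (ih (isDT_of_applyOp hT ha) hS hx)

lemma subset_NmaxI_of_isSome (hT : IsDT T) (hS : (applyQL S T).isSome) : ↑T.N ⊆ NmaxI S := by
  induction S generalizing T with
  | nil => rintro x - ⟨_, _, ⟨⟩⟩
  | cons a S ih =>
    obtain ⟨T₁, ha, hS⟩ := applyQL_cons_isSome.1 hS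
    rintro x hx ⟨m, l, h⟩
    by_cases hm : a.1.Mentions x
    · rw [firstNodeOp_cons_of_mentions hm, Option.some.injEq] at h
      rw [h] at ha
      exact ((applyOp_add_eq_some_iff hT).1 ha).2.1 hx
    · rw [firstNodeOp_cons_of_not_mentions hm] at h
      have hx₁ := (mem_N_applyOp_iff hT ha fun h => hm (.inr h)).2 hx
      exact ih (isDT_of_applyOp hT ha) hS hx₁ ⟨m, l, h⟩

lemma EminI_subset_of_isSome (hT : IsDT T) (hS : (applyQL S T).isSome) : EminI S ⊆ T.E := by
  induction S generalizing T with
  | nil => rintro e ⟨⟩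
  | cons a S ih =>
    obtain ⟨T₁, ha, hS⟩ := applyQL_cons_isSome.1 hS
    intro e he
    by_cases hae : a.1.edge = e
    · rw [EminI, Set.mem_ofPred_eq, firstEdgeOp_cons_of_eq hae, Option.some.injEq] at he
      rw [he] at ha
      exact ((applyOp_del_eq_some_iff hT).1 ha).1
    · rw [mem_EminI_cons_of_ne hae] at he
      exact (mem_E_applyOp_iff hT ha hae).1 (ih (isDT_of_applyOp hT ha) hS he)

lemma subset_EmaxI_of_isSome (hT : IsDT T) (hS : (applyQL S T).isSome) : ↑T.E ⊆ EmaxI S := by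
  induction S generalizing T with
  | nil => exact fun e _ => .inr ⟨not_occursTgt_nil, not_occursTgt_nil⟩
  | cons a S ih =>
    obtain ⟨T₁, ha, hS⟩ := applyQL_cons_isSome.1 hS
    intro e he
    by_cases hae : a.1.edge = e
    · left
      obtain ⟨⟨m, l, n⟩ | ⟨m, l, n⟩, t⟩ := a <;> subst hae
      · exact absurd (hT.endpoints_mem he).2 ((applyOp_add_eq_some_iff hT).1 ha).2.1
      · exact firstEdgeOp_cons_of_eq rfl
    · have hfresh := tgt_not_mem_edge_of_applyOp hT ha he hae
      have he₁ := (mem_E_applyOp_iff hT ha hae).2 he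
      rcases ih (isDT_of_applyOp hT ha) hS he₁ with hmin | ⟨h1, h2⟩
      · exact .inl ((mem_EminI_cons_of_ne hae).2 hmin)
      · refine .inr ⟨fun h => ?_, fun h => ?_⟩ <;> rcases occursTgt_cons.1 h with h | h
        exacts [hfresh.1 h, h1 h, hfresh.2 h, h2 h]

lemma basicInput_of_isSome (hT : IsDT T) (hS : (applyQL S T).isSome) : BasicInput S T :=
  ⟨hT, NminI_subset_of_isSome hT hS, subset_NmaxI_of_isSome hT hS,
    EminI_subset_of_isSome hT hS, subset_EmaxI_of_isSome hT hS⟩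

end BasicInput

section Sufficiency

variable {S : QLSchedule} {a : QLAction} {T T₀ T₁ T₀₁ : Tree3}

lemma src_mem_NminI_cons : a.1.src ∈ NminI (a :: S) := by
  have h := firstNodeOp_cons_of_mentions (S := S) (Or.inl rfl : a.1.Mentions a.1.src)
  obtain ⟨⟨m, l, n⟩ | ⟨m, l, n⟩, t⟩ := a
  exacts [.inl (.inl ⟨l, n, h⟩), .inl (.inr ⟨l, n, h⟩)]

lemma exists_applyOp_of_basicInput (hT : BasicInput (a :: S) T) (hT₀ : IsDT T₀)
    (h₀ : applyOp a.1 T₀ = some T₀₁) (hS₀ : (applyQL S T₀₁).isSome) :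
    ∃ T₁, applyOp a.1 T = some T₁ := by
  obtain ⟨hT, hNmin, hNmax, hEmin, hEmax⟩ := hT
  obtain ⟨⟨m, l, n⟩ | ⟨m, l, n⟩, t⟩ := a
  · have hm : m ∈ T.N := hNmin src_mem_NminI_cons
    have hn : n ∉ T.N := fun hn => hNmax hn ⟨m, l, firstNodeOp_cons_of_mentions (.inr rfl)⟩
    exact ⟨_, (applyOp_add_eq_some_iff hT).2 ⟨hm, hn, rfl⟩⟩
  · have he : (m, l, n) ∈ T.E := hEmin (firstEdgeOp_cons_of_eq rfl)
    have hmn : m ≠ n := fun h => hT.self_loop_not_mem (h ▸ he)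
    -- a child edge of `n` would have to be deleted by `S` after `n` itself was deleted in `T₀`
    have hleaf : ∀ l' p, (n, l', p) ∉ T.E := by
      intro l' p hp
      have hne : (m, l, n) ≠ (n, l', p) := fun h => hmn (congrArg Prod.fst h)
      rcases hEmax hp with hmin | ⟨h1, -⟩
      · have hp₀ := EminI_subset_of_isSome (isDT_of_applyOp hT₀ h₀) hS₀
          ((mem_EminI_cons_of_ne (a := (.del m l n, t)) hne).1 hmin)
        obtain ⟨-, -, rfl⟩ := (applyOp_del_eq_some_iff hT₀).1 h₀
        exact (Finset.mem_erase.1 ((isDT_of_applyOp hT₀ h₀).endpoints_mem hp₀).1).1 rfl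
      · exact h1 (occursTgt_cons.2 (.inl rfl))
    exact ⟨_, (applyOp_del_eq_some_iff hT).2 ⟨he, hleaf, rfl⟩⟩

/-- After one step, the new tree agrees with `T₀₁` on what the step mentions and with `T` on the
rest: the former meets the input conditions of `S` on mentioned items, the latter elsewhere. -/
lemma basicInput_of_applyOp (hT : BasicInput (a :: S) T) (hT₀ : IsDT T₀)
    (h₀ : applyOp a.1 T₀ = some T₀₁) (hS₀ : (applyQL S T₀₁).isSome)
    (h : applyOp a.1 T = some T₁) : BasicInput S T₁ := by
  obtain ⟨hT, hNmin, hNmax, hEmin, hEmax⟩ := hT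
  obtain ⟨-, hNmin₀, hNmax₀, hEmin₀, hEmax₀⟩ :=
    basicInput_of_isSome (isDT_of_applyOp hT₀ h₀) hS₀
  have agree := fun x => mem_N_applyOp_iff_of_mentions (x := x) hT hT₀ h h₀
  have frame := fun x (hx : ¬ a.1.Mentions x) => mem_N_applyOp_iff hT h fun h => hx (.inr h)
  refine ⟨isDT_of_applyOp hT h, fun x hx => ?_, fun x hx => ?_, fun e he => ?_, fun e he => ?_⟩
  · by_cases hm : a.1.Mentions x
    · exact (agree x hm).2 (hNmin₀ hx)
    · exact (frame x hm).2 (hNmin ((mem_NminI_cons_of_not_mentions hm).2 hx))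
  · by_cases hm : a.1.Mentions x
    · exact hNmax₀ ((agree x hm).1 hx)
    · exact (mem_NmaxI_cons_of_not_mentions hm).1 (hNmax ((frame x hm).1 hx))
  · by_cases hae : a.1.edge = e
    · subst hae
      exact (edge_mem_applyOp_iff hT hT₀ h h₀).2 (hEmin₀ he)
    · exact (mem_E_applyOp_iff hT h hae).2 (hEmin ((mem_EminI_cons_of_ne hae).2 he))
  · by_cases hae : a.1.edge = e
    · subst hae
      exact hEmax₀ ((edge_mem_applyOp_iff hT hT₀ h h₀).1 he)
    · exact mem_EmaxI_of_mem_EmaxI_cons hae (hEmax ((mem_E_applyOp_iff hT h hae).1 he))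

lemma isSome_applyQL_of_basicInput (hS : ConsistentQL S) (hT : BasicInput S T) :
    (applyQL S T).isSome := by
  induction S generalizing T with
  | nil => rfl
  | cons a S ih =>
    obtain ⟨T₀, hT₀, hS₀⟩ := hS
    obtain ⟨T₀₁, h₀, hS₀⟩ := applyQL_cons_isSome.1 hS₀
    obtain ⟨T₁, h⟩ := exists_applyOp_of_basicInput hT hT₀ h₀ hS₀
    exact applyQL_cons_isSome.2 ⟨T₁, h, ih ⟨T₀₁, isDT_of_applyOp hT₀ h₀, hS₀⟩
      (basicInput_of_applyOp hT hT₀ h₀ hS₀ h)⟩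

end Sufficiency

section Undo

def Op.undo : Op → Op
  | .add m l n => .del m l n
  | .del m l n => .add m l n

namespace Op

@[simp] lemma undo_src (o : Op) : o.undo.src = o.src := by cases o <;> rfl

@[simp] lemma undo_tgt (o : Op) : o.undo.tgt = o.tgt := by cases o <;> rfl

@[simp] lemma undo_edge (o : Op) : o.undo.edge = o.edge := by cases o <;> rfl

@[simp] lemma undo_undo (o : Op) : o.undo.undo = o := by cases o <;> rfl

end Op

def undo (S : QLSchedule) : QLSchedule := (S.map fun a => (a.1.undo, a.2)).reverse

variable {S : QLSchedule} {T T' T₁ : Tree3} {o : Op}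

lemma ops_undo : ops (undo S) = ((ops S).map Op.undo).reverse := by
  simp [undo, ops]

lemma undo_undo : undo (undo S) = S := by
  simp [undo, List.map_reverse, Function.comp_def]

lemma applyOp_undo (hT : IsDT T) (h : applyOp o T = some T₁) : applyOp o.undo T₁ = some T := by
  cases o with
  | add m l n =>
    obtain ⟨hm, hn, rfl⟩ := (applyOp_add_eq_some_iff hT).1 h
    have hE : (m, l, n) ∉ T.E := fun he => hn (hT.endpoints_mem he).2
    refine (applyOp_del_eq_some_iff (hT.insert_leaf hm hn)).2
      ⟨Finset.mem_insert_self _ _, ?_, ?_⟩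
    · intro l' p hp
      rcases Finset.mem_insert.1 hp with h | h
      · exact hn ((show n = m from congrArg Prod.fst h) ▸ hm)
      · exact hn (hT.endpoints_mem h).1
    · simp [Finset.erase_insert hn, Finset.erase_insert hE]
  | del m l n =>
    obtain ⟨he, -, rfl⟩ := (applyOp_del_eq_some_iff hT).1 h
    have hmn : m ≠ n := fun h => hT.self_loop_not_mem (h ▸ he)
    refine (applyOp_add_eq_some_iff (isDT_of_applyOp hT h)).2 ⟨?_, by simp, ?_⟩
    · exact Finset.mem_erase.2 ⟨hmn, (hT.endpoints_mem he).1⟩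
    · simp [Finset.insert_erase (hT.endpoints_mem he).2, Finset.insert_erase he]

lemma applyQL_undo (hT : IsDT T) (h : applyQL S T = some T') : applyQL (undo S) T' = some T := by
  induction S generalizing T with
  | nil => cases h; rfl
  | cons a S ih =>
    simp only [applyQL] at h
    cases ha : applyOp a.1 T with
    | none => simp [ha] at h
    | some T₁ =>
      rw [ha] at h
      have hundo : undo (a :: S) = undo S ++ [(a.1.undo, a.2)] := by simp [undo]
      simp [hundo, applyQL_append, ih (isDT_of_applyOp hT ha) h, applyQL, applyOp_undo hT ha]

lemma firstNodeOp_undo (x : Node) : firstNodeOp (undo S) x = (lastNodeOp S x).map Op.undo := by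
  simp [firstNodeOp, lastNodeOp, ops_undo, ← List.map_reverse, List.find?_map]

lemma firstEdgeOp_undo (e : Edge) : firstEdgeOp (undo S) e = (lastEdgeOp S e).map Op.undo := by
  simp [firstEdgeOp, lastEdgeOp, ops_undo, ← List.map_reverse, List.find?_map]

lemma occursTgt_undo (x : Node) : occursTgt (undo S) x ↔ occursTgt S x := by
  simp [occursTgt, ops_undo]

lemma Option.map_undo_eq_some_add {oo : Option Op} {m l n : Node} :
    oo.map Op.undo = some (.add m l n) ↔ oo = some (.del m l n) := by
  rcases oo with _ | ⟨_ | _⟩ <;> simp [Op.undo]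

lemma Option.map_undo_eq_some_del {oo : Option Op} {m l n : Node} :
    oo.map Op.undo = some (.del m l n) ↔ oo = some (.add m l n) := by
  rcases oo with _ | ⟨_ | _⟩ <;> simp [Op.undo]

lemma NminI_undo : NminI (undo S) = NminO S := by
  ext x
  simp only [NminI, NminO, Set.mem_union, Set.mem_ofPred_eq, firstNodeOp_undo,
    Option.map_undo_eq_some_add, Option.map_undo_eq_some_del]

lemma NmaxI_undo : NmaxI (undo S) = NmaxO S := by
  ext x
  simp only [NmaxI, NmaxO, Set.mem_ofPred_eq, firstNodeOp_undo, Option.map_undo_eq_some_add]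

lemma EminI_undo : EminI (undo S) = EminO S := by
  ext e
  simp only [EminI, EminO, Set.mem_ofPred_eq, firstEdgeOp_undo, Option.map_undo_eq_some_del]

lemma EmaxI_undo : EmaxI (undo S) = EmaxO S := by
  simp only [EmaxI, EmaxO, EminI_undo, occursTgt_undo]

lemma basicInput_undo_iff : BasicInput (undo S) T ↔ BasicOutput S T := by
  simp only [BasicInput, BasicOutput, NminI_undo, NmaxI_undo, EminI_undo, EmaxI_undo]

lemma ConsistentQL.undo (hS : ConsistentQL S) : ConsistentQL (undo S) := by
  obtain ⟨T, hT, hS⟩ := hS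
  obtain ⟨T', h⟩ := Option.isSome_iff_exists.1 hS
  exact ⟨T', isDT_of_applyQL hT h, by rw [applyQL_undo hT h]; rfl⟩

lemma basicOutput_of_applyQL_eq (hT : IsDT T) (h : applyQL S T = some T') : BasicOutput S T' :=
  basicInput_undo_iff.1 <|
    basicInput_of_isSome (isDT_of_applyQL hT h) (by rw [applyQL_undo hT h]; rfl)

lemma exists_applyQL_eq_of_basicOutput (hS : ConsistentQL S) (hT' : BasicOutput S T') :
    ∃ T, IsDT T ∧ applyQL S T = some T' := by
  obtain ⟨T, hT⟩ := Option.isSome_iff_exists.1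
    (isSome_applyQL_of_basicInput hS.undo (basicInput_undo_iff.2 hT'))
  refine ⟨T, isDT_of_applyQL hT'.1 hT, ?_⟩
  simpa [undo_undo] using applyQL_undo hT'.1 hT

end Undo

section Forests

variable {A B : Set Edge} {P Q : Node → Prop}

lemma SPath.of_union (hAP : ∀ e ∈ A, P e.2.2) (hBA : ∀ e ∈ B, P e.1 → e ∈ A)
    {a b : Node} {lp : List Label} (hp : SPath (A ∪ B) a lp b) (ha : P a) : SPath A a lp b := by
  induction hp with
  | nil n => exact .nil n
  | cons he _ ih =>
    have he : _ ∈ A := he.elim id fun he => hBA _ he ha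
    exact .cons he (ih (hAP _ he))

lemma IsForest.union (hA : IsForest A) (hB : IsForest B) (hAP : ∀ e ∈ A, P e.2.2)
    (hBQ : ∀ e ∈ B, Q e.2.2) (hBA : ∀ e ∈ B, P e.1 ∨ P e.2.2 → e ∈ A)
    (hAB : ∀ e ∈ A, Q e.1 ∨ Q e.2.2 → e ∈ B) : IsForest (A ∪ B) := by
  refine ⟨?_, ?_⟩
  · rintro e (he | he) e' (he' | he') h
    · exact hA.1 e he e' he' h
    · exact hA.1 e he e' (hBA e' he' (.inr (h ▸ hAP e he))) h
    · exact hB.1 e he e' (hAB e' he' (.inr (h ▸ hBQ e he))) h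
    · exact hB.1 e he e' he' h
  · rintro ⟨n, _, hne, hp⟩
    cases hp with
    | nil => exact hne rfl
    | cons he hp =>
    rcases he with he | he
    · exact hA.2 ⟨n, _, List.cons_ne_nil _ _,
        .cons he (hp.of_union hAP (fun e he h => hBA e he (.inl h)) (hAP _ he))⟩
    · rw [Set.union_comm] at hp
      exact hB.2 ⟨n, _, List.cons_ne_nil _ _,
        .cons he (hp.of_union hBQ (fun e he h => hAB e he (.inl h)) (hBQ _ he))⟩

def hangForest (r : Node) (V : Finset Node) (F : Finset Edge) : Tree3 :=
  ⟨insert r V, F ∪ (V.filter fun x => ∀ e ∈ F, e.2.2 ≠ x).image fun x => (r, 0, x), r⟩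

variable {r x : Node} {V : Finset Node} {F : Finset Edge} {e : Edge}

lemma mem_hangForest_E :
    e ∈ (hangForest r V F).E ↔
      e ∈ F ∨ ∃ x ∈ V, (∀ f ∈ F, f.2.2 ≠ x) ∧ (r, 0, x) = e := by
  simp [hangForest, and_assoc]

lemma isDT_hangForest (hr : r ∉ V) (hFV : ∀ e ∈ F, e.1 ∈ V ∧ e.2.2 ∈ V)
    (hF : IsForest ↑F) : IsDT (hangForest r V F) := by
  refine ⟨Finset.mem_insert_self r V, fun e he => ?_, fun e he e' he' h => ?_, fun e he => ?_,
    fun x hx => ?_⟩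
  · rcases mem_hangForest_E.1 he with he | ⟨x, hx, -, rfl⟩
    · exact ⟨Finset.mem_insert_of_mem (hFV e he).1, Finset.mem_insert_of_mem (hFV e he).2⟩
    · exact ⟨Finset.mem_insert_self r V, Finset.mem_insert_of_mem hx⟩
  · rcases mem_hangForest_E.1 he with he | ⟨x, -, hx, rfl⟩ <;>
      rcases mem_hangForest_E.1 he' with he' | ⟨x', -, hx', rfl⟩
    exacts [hF.1 e he e' he' h, absurd h (hx' e he), absurd h.symm (hx e' he'),
      congrArg (fun y => (r, 0, y)) h]
  · rcases mem_hangForest_E.1 he with he | ⟨x, hx, -, rfl⟩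
    exacts [fun h : e.2.2 = r => hr (h ▸ (hFV e he).2), fun h : x = r => hr (h ▸ hx)]
  · -- induct on the number of ancestors, which drops when passing to the parent
    let anc : Node → Finset Node := fun x => V.filter fun y => ∃ lp ≠ [], SPath (↑F) y lp x
    induction x using (measure fun x => (anc x).card).wf.induction with
    | h x ih =>
    rcases Finset.mem_insert.1 hx with rfl | hx
    · exact .refl
    by_cases hroot : ∀ f ∈ F, f.2.2 ≠ x
    · exact .single ⟨0, mem_hangForest_E.2 (.inr ⟨x, hx, hroot, rfl⟩)⟩
    push Not at hroot
    obtain ⟨⟨p, l, x⟩, hpx, rfl⟩ := hroot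
    have hp : p ∈ V := (hFV _ hpx).1
    have hlt : (anc p).card < (anc x).card := by
      refine Finset.card_lt_card ⟨fun y hy => ?_, fun h => ?_⟩
      · obtain ⟨hy, lp, -, hyp⟩ := Finset.mem_filter.1 hy
        exact Finset.mem_filter.2 ⟨hy, lp ++ [l], by simp, hyp.snoc hpx⟩
      · obtain ⟨-, lp, hlp, hpp⟩ := Finset.mem_filter.1
          (h (Finset.mem_filter.2 ⟨hp, [l], List.cons_ne_nil _ _, .cons hpx (.nil _)⟩))
        exact hF.2 ⟨p, lp, hlp, hpp⟩
    exact (ih p hlt (Finset.mem_insert_of_mem hp)).tail ⟨l, mem_hangForest_E.2 (.inl hpx)⟩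

end Forests

section Gluing

variable {S : QLSchedule} {T : Tree3} {x r : Node} {e : Edge}

lemma mem_EminI_of_mem_EmaxI (h : e ∈ EmaxI S) (ho : occursTgt S e.1 ∨ occursTgt S e.2.2) :
    e ∈ EminI S :=
  h.resolve_right fun h' => ho.elim h'.1 h'.2

lemma mem_EminO_of_mem_EmaxO (h : e ∈ EmaxO S) (ho : occursTgt S e.1 ∨ occursTgt S e.2.2) :
    e ∈ EminO S :=
  h.resolve_right fun h' => ho.elim h'.1 h'.2

lemma occursTgt_of_mem_EminI (h : e ∈ EminI S) : occursTgt S e.2.2 :=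
  ⟨_, (edge_eq_of_firstEdgeOp h).1, rfl⟩

lemma occursTgt_of_mem_EminO (h : e ∈ EminO S) : occursTgt S e.2.2 :=
  ⟨_, (edge_eq_of_lastEdgeOp h).1, rfl⟩

lemma mem_NmaxI_of_not_occursTgt (h : ¬ occursTgt S x) : x ∈ NmaxI S :=
  fun ⟨_, _, hx⟩ => h ⟨_, (mentions_of_firstNodeOp hx).1, rfl⟩

lemma mem_NmaxO_of_not_occursTgt (h : ¬ occursTgt S x) : x ∈ NmaxO S :=
  fun ⟨_, _, hx⟩ => h ⟨_, (mentions_of_lastNodeOp hx).1, rfl⟩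

lemma endpoints_mem_NmaxI (hT : BasicInput S T) (he : e ∈ EmaxI S) :
    e.1 ∈ NmaxI S ∧ e.2.2 ∈ NmaxI S := by
  rcases he with he | ⟨h₁, h₂⟩
  · have hends := hT.1.endpoints_mem (hT.2.2.2.1 he)
    exact ⟨hT.2.2.1 hends.1, hT.2.2.1 hends.2⟩
  · exact ⟨mem_NmaxI_of_not_occursTgt h₁, mem_NmaxI_of_not_occursTgt h₂⟩

lemma endpoints_mem_NmaxO (hT : BasicOutput S T) (he : e ∈ EmaxO S) :
    e.1 ∈ NmaxO S ∧ e.2.2 ∈ NmaxO S := by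
  rcases he with he | ⟨h₁, h₂⟩
  · have hends := hT.1.endpoints_mem (hT.2.2.2.1 he)
    exact ⟨hT.2.2.1 hends.1, hT.2.2.1 hends.2⟩
  · exact ⟨mem_NmaxO_of_not_occursTgt h₁, mem_NmaxO_of_not_occursTgt h₂⟩

lemma ConsistentQL.exists_basicInput (hS : ConsistentQL S) : ∃ T, BasicInput S T :=
  let ⟨T, hT, hS⟩ := hS
  ⟨T, basicInput_of_isSome hT hS⟩

lemma ConsistentQL.exists_basicOutput (hS : ConsistentQL S) : ∃ T, BasicOutput S T :=
  let ⟨T, hT⟩ := hS.undo.exists_basicInput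
  ⟨T, basicInput_undo_iff.1 (undo_undo (S := S) ▸ hT)⟩

lemma ne_root_of_occursTgt (hT : IsDT T) (hS : (applyQL S T).isSome) (h : occursTgt S x) :
    x ≠ T.root := by
  induction S generalizing T with
  | nil => exact absurd h not_occursTgt_nil
  | cons a S ih =>
    obtain ⟨T₁, ha, hS⟩ := applyQL_cons_isSome.1 hS
    rcases occursTgt_cons.1 h with rfl | h
    · exact tgt_ne_root_of_applyOp hT ha
    · exact root_applyOp hT ha ▸ ih (isDT_of_applyOp hT ha) hS h

lemma exists_EminI_parent (hS : ConsistentQL S) (hx : x ∈ NmaxI S) (hocc : occursTgt S x) :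
    ∃ e ∈ EminI S, e.2.2 = x := by
  obtain ⟨T, hT, hS⟩ := hS
  -- first used as a source, `x` is a non-root node of every input tree, and as `x` is also a
  -- target in `S` its parent edge there must be deleted by `S`
  have of_NminI : x ∈ NminI S → ∃ e ∈ EminI S, e.2.2 = x := fun hxN => by
    obtain ⟨m, l, he⟩ := hT.exists_parent (NminI_subset_of_isSome hT hS hxN)
      (ne_root_of_occursTgt hT hS hocc)
    exact ⟨_, mem_EminI_of_mem_EmaxI (subset_EmaxI_of_isSome hT hS he) (.inr hocc), rfl⟩
  obtain ⟨o, ho⟩ := exists_firstNodeOp_of_occursTgt hocc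
  cases o with
  | add m l n =>
    obtain rfl | rfl : m = x ∨ n = x := (mentions_of_firstNodeOp ho).2
    exacts [of_NminI (.inl (.inl ⟨l, n, ho⟩)), absurd ⟨m, l, ho⟩ hx]
  | del m l n =>
    obtain rfl | rfl : m = x ∨ n = x := (mentions_of_firstNodeOp ho).2
    exacts [of_NminI (.inl (.inr ⟨l, n, ho⟩)), ⟨_, firstEdgeOp_edge_of_firstNodeOp ho, rfl⟩]

lemma exists_EminO_parent (hS : ConsistentQL S) (hx : x ∈ NmaxO S) (hocc : occursTgt S x) :
    ∃ e ∈ EminO S, e.2.2 = x := by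
  rw [← NmaxI_undo] at hx
  rw [← EminI_undo]
  exact exists_EminI_parent hS.undo hx ((occursTgt_undo x).2 hocc)

variable {V : Finset Node} {F : Finset Edge}

lemma basicInput_hangForest (hT : IsDT (hangForest r V F)) (hr : ¬ occursTgt S r)
    (hmin : NminI S ⊆ V) (hmax : ↑V ⊆ NmaxI S)
    (hFmin : EminI S ⊆ F) (hFmax : ↑F ⊆ EmaxI S)
    (hparent : ∀ x ∈ V, occursTgt S x → ∃ e ∈ F, e.2.2 = x) :
    BasicInput S (hangForest r V F) := by
  refine ⟨hT, fun x hx => Finset.mem_insert_of_mem (hmin hx), fun x hx => ?_,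
    fun e he => mem_hangForest_E.2 (.inl (hFmin he)), fun e he => ?_⟩
  · rcases Finset.mem_insert.1 hx with rfl | hx
    exacts [mem_NmaxI_of_not_occursTgt hr, hmax hx]
  · rcases mem_hangForest_E.1 he with he | ⟨x, hx, hroot, rfl⟩
    · exact hFmax he
    · refine .inr ⟨hr, fun hocc => ?_⟩
      obtain ⟨f, hf, hfx⟩ := hparent x hx hocc
      exact hroot f hf hfx

lemma basicOutput_hangForest (hT : IsDT (hangForest r V F)) (hr : ¬ occursTgt S r)
    (hmin : NminO S ⊆ V) (hmax : ↑V ⊆ NmaxO S)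
    (hFmin : EminO S ⊆ F) (hFmax : ↑F ⊆ EmaxO S)
    (hparent : ∀ x ∈ V, occursTgt S x → ∃ e ∈ F, e.2.2 = x) :
    BasicOutput S (hangForest r V F) := by
  rw [← NminI_undo] at hmin
  rw [← NmaxI_undo] at hmax
  rw [← EminI_undo] at hFmin
  rw [← EmaxI_undo] at hFmax
  simp only [← occursTgt_undo (S := S)] at hr hparent
  exact basicInput_undo_iff.1 (basicInput_hangForest hT hr hmin hmax hFmin hFmax hparent)

end Gluing

section Concatenation

def nodes (S : QLSchedule) : Finset Node := ((ops S).map Op.src ++ (ops S).map Op.tgt).toFinset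

def edges (S : QLSchedule) : Finset Edge := ((ops S).map Op.edge).toFinset

variable {S S₁ S₂ : QLSchedule} {x : Node} {e : Edge} {o : Op}

lemma mem_nodes (ho : o ∈ ops S) (hx : o.Mentions x) : x ∈ nodes S := by
  simp only [nodes, List.mem_toFinset, List.mem_append, List.mem_map]
  rcases hx with rfl | rfl
  exacts [.inl ⟨o, ho, rfl⟩, .inr ⟨o, ho, rfl⟩]

lemma not_occursTgt_of_not_mem_nodes (hx : x ∉ nodes S) : ¬ occursTgt S x :=
  fun ⟨_, ho, hox⟩ => hx (mem_nodes ho (.inr hox))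

lemma NminI_subset_nodes : NminI S ⊆ nodes S := by
  rintro x ((⟨_, _, h⟩ | ⟨_, _, h⟩) | ⟨_, _, h⟩) <;>
    exact mem_nodes (mentions_of_firstNodeOp h).1 (mentions_of_firstNodeOp h).2

lemma NminO_subset_nodes : NminO S ⊆ nodes S := by
  rintro x ((⟨_, _, h⟩ | ⟨_, _, h⟩) | ⟨_, _, h⟩) <;>
    exact mem_nodes (mentions_of_lastNodeOp h).1 (mentions_of_lastNodeOp h).2

lemma EminI_subset_edges : EminI S ⊆ edges S := fun _ he =>
  List.mem_toFinset.2 (List.mem_map.2 ⟨_, edge_eq_of_firstEdgeOp he⟩)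

lemma EminO_subset_edges : EminO S ⊆ edges S := fun _ he =>
  List.mem_toFinset.2 (List.mem_map.2 ⟨_, edge_eq_of_lastEdgeOp he⟩)

lemma endpoints_mem_nodes_union (he : e ∈ EminO S₁ ∪ EminI S₂) :
    e.1 ∈ nodes S₁ ∪ nodes S₂ ∧ e.2.2 ∈ nodes S₁ ∪ nodes S₂ := by
  rcases he with he | he
  · have ho := (edge_eq_of_lastEdgeOp he).1
    exact ⟨Finset.mem_union_left _ (mem_nodes ho (.inl rfl)),
      Finset.mem_union_left _ (mem_nodes ho (.inr rfl))⟩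
  · have ho := (edge_eq_of_firstEdgeOp he).1
    exact ⟨Finset.mem_union_right _ (mem_nodes ho (.inl rfl)),
      Finset.mem_union_right _ (mem_nodes ho (.inr rfl))⟩

lemma coe_filter_edges_union :
    (↑((edges S₁ ∪ edges S₂).filter (· ∈ EminO S₁ ∪ EminI S₂)) : Set Edge) =
      EminO S₁ ∪ EminI S₂ := by
  ext e
  simp only [Finset.coe_filter, Finset.mem_union, Set.mem_ofPred_eq, and_iff_right_iff_imp]
  exact Or.imp (fun he => EminO_subset_edges he) (fun he => EminI_subset_edges he)

lemma isForest_EminO_union_EminI (h₁ : ConsistentQL S₁) (h₂ : ConsistentQL S₂)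
    (c₂ : EminI S₂ ⊆ EmaxO S₁) (c₄ : EminO S₁ ⊆ EmaxI S₂) :
    IsForest (EminO S₁ ∪ EminI S₂) := by
  obtain ⟨T₁, hT₁⟩ := h₁.exists_basicOutput
  obtain ⟨T₂, hT₂⟩ := h₂.exists_basicInput
  exact (hT₁.1.isForest.mono hT₁.2.2.2.1).union (hT₂.1.isForest.mono hT₂.2.2.2.1)
    (fun _ => occursTgt_of_mem_EminO) (fun _ => occursTgt_of_mem_EminI)
    (fun _ he => mem_EminO_of_mem_EmaxO (c₂ he)) (fun _ he => mem_EminI_of_mem_EmaxI (c₄ he))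

/-- Hang the forest `EminO S₁ ∪ EminI S₂`, on all nodes of `S₁` and `S₂` allowed on both
sides, under a fresh root. -/
theorem exists_basicOutput_basicInput (h₁ : ConsistentQL S₁) (h₂ : ConsistentQL S₂)
    (c₁ : NminI S₂ ⊆ NmaxO S₁) (c₂ : EminI S₂ ⊆ EmaxO S₁)
    (c₃ : NminO S₁ ⊆ NmaxI S₂) (c₄ : EminO S₁ ⊆ EmaxI S₂) :
    ∃ T, BasicOutput S₁ T ∧ BasicInput S₂ T := by
  obtain ⟨T₁, hT₁⟩ := h₁.exists_basicOutput
  obtain ⟨T₂, hT₂⟩ := h₂.exists_basicInput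
  obtain ⟨r, hr⟩ := Infinite.exists_notMem_finset (nodes S₁ ∪ nodes S₂)
  set V := (nodes S₁ ∪ nodes S₂).filter fun x => x ∈ NmaxO S₁ ∧ x ∈ NmaxI S₂
  set F := (edges S₁ ∪ edges S₂).filter (· ∈ EminO S₁ ∪ EminI S₂)
  have hF : (↑F : Set Edge) = EminO S₁ ∪ EminI S₂ := coe_filter_edges_union
  have hFO : ↑F ⊆ EmaxO S₁ := hF ▸ Set.union_subset (fun _ => .inl) c₂
  have hFI : ↑F ⊆ EmaxI S₂ := hF ▸ Set.union_subset c₄ (fun _ => .inl)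
  have hFV : ∀ e ∈ F, e.1 ∈ V ∧ e.2.2 ∈ V := by
    intro e he
    have hM := endpoints_mem_nodes_union ((Set.ext_iff.1 hF e).1 he)
    have hO := endpoints_mem_NmaxO hT₁ (hFO he)
    have hI := endpoints_mem_NmaxI hT₂ (hFI he)
    exact ⟨Finset.mem_filter.2 ⟨hM.1, hO.1, hI.1⟩,
      Finset.mem_filter.2 ⟨hM.2, hO.2, hI.2⟩⟩
  have hT : IsDT (hangForest r V F) := isDT_hangForest (fun h => hr (Finset.mem_filter.1 h).1)
    hFV (hF ▸ isForest_EminO_union_EminI h₁ h₂ c₂ c₄)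
  refine ⟨_, basicOutput_hangForest hT ?_ ?_ ?_ ?_ hFO ?_,
    basicInput_hangForest hT ?_ ?_ ?_ ?_ hFI ?_⟩
  · exact not_occursTgt_of_not_mem_nodes fun h => hr (Finset.mem_union_left _ h)
  · exact fun x hx => Finset.mem_filter.2
      ⟨Finset.mem_union_left _ (NminO_subset_nodes hx), hT₁.2.2.1 (hT₁.2.1 hx), c₃ hx⟩
  · exact fun x hx => (Finset.mem_filter.1 hx).2.1
  · exact hF ▸ Set.subset_union_left
  · intro x hx hocc
    obtain ⟨e, he, hex⟩ := exists_EminO_parent h₁ (Finset.mem_filter.1 hx).2.1 hocc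
    exact ⟨e, (Set.ext_iff.1 hF e).2 (.inl he), hex⟩
  · exact not_occursTgt_of_not_mem_nodes fun h => hr (Finset.mem_union_right _ h)
  · exact fun x hx => Finset.mem_filter.2
      ⟨Finset.mem_union_right _ (NminI_subset_nodes hx), c₁ hx, hT₂.2.2.1 (hT₂.2.1 hx)⟩
  · exact fun x hx => (Finset.mem_filter.1 hx).2.2
  · exact hF ▸ Set.subset_union_right
  · intro x hx hocc
    obtain ⟨e, he, hex⟩ := exists_EminI_parent h₂ (Finset.mem_filter.1 hx).2.2 hocc
    exact ⟨e, (Set.ext_iff.1 hF e).2 (.inr he), hex⟩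

end Concatenation

/-- The concatenation of two consistent QL schedules is consistent iff
the output sets of the first fit the input sets of the second. -/
theorem concat_consistent_iff (S₁ S₂ : QLSchedule)
    (h₁ : ConsistentQL S₁) (h₂ : ConsistentQL S₂) :
    ConsistentQL (S₁ ++ S₂) ↔
      (NminI S₂ ⊆ NmaxO S₁ ∧ EminI S₂ ⊆ EmaxO S₁ ∧
       NminO S₁ ⊆ NmaxI S₂ ∧ EminO S₁ ⊆ EmaxI S₂) := by
  constructor
  · rintro ⟨T, hT, hS⟩
    rw [applyQL_append] at hS
    obtain ⟨T', hrun⟩ := Option.isSome_iff_exists.1 (Option.isSome_of_isSome_bind hS)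
    obtain ⟨hT', hNminO, hNmaxO, hEminO, hEmaxO⟩ := basicOutput_of_applyQL_eq hT hrun
    obtain ⟨-, hNminI, hNmaxI, hEminI, hEmaxI⟩ :=
      basicInput_of_isSome hT' (by simpa [hrun] using hS)
    exact ⟨hNminI.trans hNmaxO, hEminI.trans hEmaxO, hNminO.trans hNmaxI, hEminO.trans hEmaxI⟩
  · rintro ⟨c₁, c₂, c₃, c₄⟩
    obtain ⟨T', hout, hin⟩ := exists_basicOutput_basicInput h₁ h₂ c₁ c₂ c₃ c₄
    obtain ⟨T, hT, hT'⟩ := exists_applyQL_eq_of_basicOutput h₁ hout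
    refine ⟨T, hT, ?_⟩
    rw [applyQL_append, hT']
    exact isSome_applyQL_of_basicInput h₂ hin
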